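/- Every descending Gauss code can be transformed into the empty code by a finite sequence of C1 and W moves; in particular, every descending Gauss code represents the trivial welded knot. -/

import Mathlib

/-!
Gauss codes for welded knots.

A Gauss code is a cyclic word in which each chord label occurs exactly twice,
once as a tail (`isHead = false`) and once as a head (`isHead = true`), both
occurrences carrying the common sign of the chord.  We represent the cyclic
word by a linear list of entries, working up to rotation (`List.rotate`) and
injective relabelling of the chords.
-/

/-- An endpoint of a chord: `(chord label, isHead, sign)`, where `isHead = false`
means a tail (over-passing) endpoint and `isHead = true` a head (under-passing)
endpoint, and the sign `true`/`false` stands for `+1`/`-1`. -/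
abbrev GEntry : Type := ℕ × Bool × Bool

/-- A (linear representative of a cyclic) word of endpoints. -/
abbrev GWord : Type := List GEntry

/-- The set of chord labels occurring in a word. -/
def chordSet (w : GWord) : Set ℕ := {a | ∃ e ∈ w, e.1 = a}

/-- `w` is a Gauss code: every chord label that occurs in `w` occurs exactly
twice, once as a tail and once as a head, with a common sign. -/
def IsGaussCode (w : GWord) : Prop :=
  ∀ a ∈ chordSet w,
    w.countP (fun e => e.1 == a) = 2 ∧
    ∃ s : Bool, (a, false, s) ∈ w ∧ (a, true, s) ∈ w

/-- The crossing change at the set `S` of chords: at every chord of `S`, the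
tail and head markings of its two occurrences are exchanged and its sign is
reversed. -/
def crossingChange (S : Finset ℕ) (w : GWord) : GWord :=
  w.map fun e => if e.1 ∈ S then (e.1, !e.2.1, !e.2.2) else e

/-- Deletion of the chord `a` (both of its endpoints) from the word. -/
def deleteChord (a : ℕ) (w : GWord) : GWord :=
  w.filter fun e => e.1 != a

/-- Equality of words up to cyclic permutation. -/
def RotEq (w w' : GWord) : Prop := ∃ n : ℕ, w' = w.rotate n

/-- Renaming the chords of a word by `f`. -/
def relabelWord (f : ℕ → ℕ) (w : GWord) : GWord := w.map fun e => (f e.1, e.2)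

/-- Equality of words up to cyclic permutation and (injective) renaming of
the chords. -/
def CyclicRename (w w' : GWord) : Prop :=
  ∃ (n : ℕ) (f : ℕ → ℕ), Function.Injective f ∧ w' = relabelWord f (w.rotate n)

/-- Raw C1 move (deleting direction): deletion of a chord whose two endpoints
occupy adjacent positions; the inserting direction is the converse relation. -/
def C1delRaw (u v : GWord) : Prop :=
  ∃ (x y : GWord) (a : ℕ) (h s : Bool),
    (∀ e ∈ x ++ y, e.1 ≠ a) ∧
    u = x ++ (a, h, s) :: (a, !h, s) :: y ∧
    v = x ++ y

/-- Raw W move: interchange of two adjacent endpoints that are both tails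
(of any two chords, regardless of signs). -/
def WRaw (u v : GWord) : Prop :=
  ∃ (x y : GWord) (a b : ℕ) (s t : Bool),
    u = x ++ (a, false, s) :: (b, false, t) :: y ∧
    v = x ++ (b, false, t) :: (a, false, s) :: y

/-- Raw C2 move (deleting direction): deletion of a pair of chords of opposite
signs whose two tails occupy adjacent positions and whose two heads occupy
adjacent positions. -/
def C2delRaw (u v : GWord) : Prop :=
  ∃ (x y z : GWord) (a b : ℕ) (s : Bool),
    a ≠ b ∧
    (∀ e ∈ x ++ y ++ z, e.1 ≠ a ∧ e.1 ≠ b) ∧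
    (u = x ++ (a, false, s) :: (b, false, !s) :: (y ++ (a, true, s) :: (b, true, !s) :: z) ∨
     u = x ++ (a, false, s) :: (b, false, !s) :: (y ++ (b, true, !s) :: (a, true, s) :: z)) ∧
    v = x ++ y ++ z

/-- Raw C3 move: the Gauss-code translation of the planar Reidemeister move of
type 3.  Three strands `A`, `B`, `C` (modelled on the lines `y = -1`, `y = x`,
`y = -x` and their directions `(1,0)`, `(1,1)`, `(-1,1)`, possibly reversed
according to `dA`, `dB`, `dC`) meet pairwise in the chords `a = AB`, `b = AC`,
`c = BC`; `oAB`, `oAC`, `oBC` record which strand passes over in each pair and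
must come from a linear height order.  The six endpoints form three adjacent
pairs, one on each strand, and the move exchanges the order within each pair;
the head/tail pattern is determined by the heights and the signs by the heights
and the directions, as in a planar diagram. -/
def C3Raw (u v : GWord) : Prop :=
  ∃ (x y z t : GWord) (a b c : ℕ) (oAB oAC oBC dA dB dC swap : Bool),
    a ≠ b ∧ a ≠ c ∧ b ≠ c ∧
    (oAB = oBC → oAC = oAB) ∧
    (let sa : Bool := (dA == dB) == oAB
     let sb : Bool := (dA == dC) == oAC
     let sc : Bool := (dB == dC) == oBC
     let PA : GWord :=
       if dA then [(a, !oAB, sa), (b, !oAC, sb)] else [(b, !oAC, sb), (a, !oAB, sa)]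
     let PB : GWord :=
       if dB then [(a, oAB, sa), (c, !oBC, sc)] else [(c, !oBC, sc), (a, oAB, sa)]
     let PC : GWord :=
       if dC then [(b, oAC, sb), (c, oBC, sc)] else [(c, oBC, sc), (b, oAC, sb)]
     let Q1 : GWord := if swap then PC else PB
     let Q2 : GWord := if swap then PB else PC
     u = x ++ PA ++ y ++ Q1 ++ z ++ Q2 ++ t ∧
     v = x ++ PA.reverse ++ y ++ Q1.reverse ++ z ++ Q2.reverse ++ t)

/-- One welded Reidemeister move (C1, C2, C3 or W, in either direction),
performed up to cyclic permutation and renaming of chords. -/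
def WeldedStep (u v : GWord) : Prop :=
  ∃ u₀ v₀ : GWord, CyclicRename u u₀ ∧ CyclicRename v₀ v ∧
    (C1delRaw u₀ v₀ ∨ C1delRaw v₀ u₀ ∨ C2delRaw u₀ v₀ ∨ C2delRaw v₀ u₀ ∨
     C3Raw u₀ v₀ ∨ C3Raw v₀ u₀ ∨ WRaw u₀ v₀)

/-- Welded equivalence: two Gauss codes are welded-equivalent if they are
related by a finite sequence of C1, C2, C3 and W moves (on cyclic words). -/
def WeldedEquiv : GWord → GWord → Prop := Relation.EqvGen WeldedStep

/-- A Gauss code represents the trivial welded knot iff it is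
welded-equivalent to the empty code. -/
def RepresentsTrivial (w : GWord) : Prop := WeldedEquiv w []

/-- One C1 or W move (in either direction), up to cyclic permutation and
renaming of chords. -/
def CWStep (u v : GWord) : Prop :=
  ∃ u₀ v₀ : GWord, CyclicRename u u₀ ∧ CyclicRename v₀ v ∧
    (C1delRaw u₀ v₀ ∨ C1delRaw v₀ u₀ ∨ WRaw u₀ v₀)

/-- Relatedness by a finite sequence of C1 and W moves alone. -/
def CWEquiv : GWord → GWord → Prop := Relation.EqvGen CWStep

/-- One W move, up to cyclic permutation. -/
def WStepRot (u v : GWord) : Prop :=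
  ∃ u₀ v₀ : GWord, RotEq u u₀ ∧ RotEq v₀ v ∧ WRaw u₀ v₀

/-- One deleting C1 move, up to cyclic permutation. -/
def C1StepRot (u v : GWord) : Prop :=
  ∃ u₀ v₀ : GWord, RotEq u u₀ ∧ RotEq v₀ v ∧ C1delRaw u₀ v₀

/-- In the linear word `v`, no chord has its head occurring strictly before
its tail. -/
def TailsFirst (v : GWord) : Prop :=
  ¬ ∃ (x y z : GWord) (a : ℕ) (s s' : Bool),
      v = x ++ (a, true, s) :: (y ++ (a, false, s') :: z)

/-- A Gauss code is descending if the cyclic word can be cut at some point and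
read in one of the two directions so that every chord's tail occurs before its
head. -/
def IsDescending (w : GWord) : Prop :=
  ∃ n : ℕ, TailsFirst (w.rotate n) ∨ TailsFirst ((w.rotate n).reverse)

/-- `c(D)`: the minimal number of chords of a Gauss code representing the same
welded knot as `D`. -/
noncomputable def minCrossing (D : GWord) : ℕ :=
  sInf {n : ℕ | ∃ D' : GWord, IsGaussCode D' ∧ WeldedEquiv D D' ∧ (chordSet D').ncard = n}

/-- `u(D)`: the minimal cardinality of a set `S` of chords of `D` such that the
crossing change at `S` turns `D` into a Gauss code representing the trivial
welded knot. -/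
noncomputable def unknottingNumWord (D : GWord) : ℕ :=
  sInf {k : ℕ | ∃ S : Finset ℕ, ↑S ⊆ chordSet D ∧ S.card = k ∧
    WeldedEquiv (crossingChange S D) []}

/-- `u(K)`: the minimum of `u(D')` over all Gauss codes `D'` representing the
same welded knot as `D`. -/
noncomputable def unknottingNum (D : GWord) : ℕ :=
  sInf {k : ℕ | ∃ D' : GWord, IsGaussCode D' ∧ WeldedEquiv D D' ∧ unknottingNumWord D' = k}

/-!
Cut the descending code so that every tail precedes its head and look at the first head. All
entries before it are tails, among them the tail of the same chord; W moves slide that tail to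
the right across the other tails until it meets its head, and a C1 move deletes the chord. What
remains is again a descending Gauss code, so induction on the length empties the word. Reading
the word backwards is harmless because W and C1 moves are invariant under reversal.
-/

open List Relation

theorem List.pair_sublist_iff {α : Type*} {a b : α} {l : List α} :
    [a, b] <+ l ↔ ∃ x y z, l = x ++ a :: (y ++ b :: z) := by
  constructor
  · rw [cons_sublist_iff]
    rintro ⟨r₁, r₂, rfl, ha, hb⟩
    obtain ⟨x, y, rfl⟩ := append_of_mem ha
    obtain ⟨y', z, rfl⟩ := append_of_mem (singleton_sublist.1 hb)
    exact ⟨x, y ++ y', z, by simp⟩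
  · rintro ⟨x, y, z, rfl⟩
    simp

theorem TailsFirst.sublist {u v : GWord} (hv : TailsFirst v) (huv : u <+ v) : TailsFirst u := by
  rintro ⟨x, y, z, a, s, s', rfl⟩
  obtain ⟨x', y', z', hv'⟩ := pair_sublist_iff.1 ((pair_sublist_iff.2 ⟨x, y, z, rfl⟩).trans huv)
  exact hv ⟨x', y', z', a, s, s', hv'⟩

theorem IsGaussCode.perm {v w : GWord} (hv : IsGaussCode v) (hvw : v ~ w) : IsGaussCode w := by
  rintro a ⟨e, he, rfl⟩
  obtain ⟨hc, s, ht, hh⟩ := hv e.1 ⟨e, hvw.mem_iff.2 he, rfl⟩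
  exact ⟨hvw.countP_eq _ ▸ hc, s, hvw.mem_iff.1 ht, hvw.mem_iff.1 hh⟩

theorem IsGaussCode.deleteChord {v : GWord} (hv : IsGaussCode v) (a : ℕ) :
    IsGaussCode (deleteChord a v) := by
  rintro b ⟨e, he, rfl⟩
  simp only [_root_.deleteChord, mem_filter, bne_iff_ne] at he ⊢
  obtain ⟨he, hea⟩ := he
  obtain ⟨hc, s, ht, hh⟩ := hv e.1 ⟨e, he, rfl⟩
  refine ⟨?_, s, ⟨ht, by simpa using hea⟩, ⟨hh, by simpa using hea⟩⟩
  rw [countP_filter, ← hc]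
  refine countP_congr fun e' _ => ?_
  simp only [Bool.and_eq_true, beq_iff_eq, bne_iff_ne]
  exact and_iff_left_of_imp fun h => h ▸ hea

theorem IsGaussCode.label_ne_of_eq_append {v x y z : GWord} {e₁ e₂ : GEntry} {a : ℕ}
    (hv : IsGaussCode v) (hdec : v = x ++ e₁ :: (y ++ e₂ :: z)) (h₁ : e₁.1 = a)
    (h₂ : e₂.1 = a) : ∀ e ∈ x ++ y ++ z, e.1 ≠ a := by
  have hc := (hv a ⟨e₁, by simp [hdec], h₁⟩).1
  simp only [hdec, countP_append, countP_cons, h₁, h₂, beq_self_eq_true, if_true] at hc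
  have : (x ++ y ++ z).countP (fun e => e.1 == a) = 0 := by simp only [countP_append]; omega
  intro e he
  simpa using countP_eq_zero.1 this e he

theorem deleteChord_eq_append {x y z : GWord} {e₁ e₂ : GEntry} {a : ℕ}
    (hxyz : ∀ e ∈ x ++ y ++ z, e.1 ≠ a) (h₁ : e₁.1 = a) (h₂ : e₂.1 = a) :
    deleteChord a (x ++ e₁ :: (y ++ e₂ :: z)) = x ++ y ++ z := by
  have hfix : (x ++ y ++ z).filter (fun e => e.1 != a) = x ++ y ++ z :=
    filter_eq_self.2 (by simpa using hxyz)
  rw [← hfix]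
  simp [_root_.deleteChord, h₁, h₂]

def CWRaw (u v : GWord) : Prop := WRaw u v ∨ C1delRaw u v

theorem CWRaw.reverse {u v : GWord} (h : CWRaw u v) : CWRaw u.reverse v.reverse := by
  rcases h with ⟨x, y, a, b, s, t, rfl, rfl⟩ | ⟨x, y, a, h, s, hxy, rfl, rfl⟩
  · exact Or.inl ⟨y.reverse, x.reverse, b, a, t, s, by simp, by simp⟩
  · refine Or.inr ⟨y.reverse, x.reverse, a, !h, s, ?_, by simp, by simp⟩
    simpa [or_comm] using hxy

theorem cyclicRename_rotate (w : GWord) (n : ℕ) : CyclicRename w (w.rotate n) :=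
  ⟨n, id, Function.injective_id, by simp [relabelWord]⟩

theorem CWStep.of_cwRaw_rotate {w v : GWord} {n : ℕ} (h : CWRaw (w.rotate n) v) :
    CWStep w v :=
  ⟨w.rotate n, v, cyclicRename_rotate w n, by simpa using cyclicRename_rotate v 0,
    h.elim (Or.inr ∘ Or.inr) Or.inl⟩

theorem reflTransGen_cwStep_nil_of_rotate {w : GWord} {n : ℕ}
    (h : ReflTransGen CWRaw (w.rotate n) []) : ReflTransGen CWStep w [] := by
  -- the rotation is absorbed into the cut of the first move
  rcases h.cases_head with h | ⟨v, hstep, hrest⟩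
  · rw [rotate_eq_nil_iff.1 h]
  · refine .head (CWStep.of_cwRaw_rotate hstep) (ReflTransGen.mono (fun _ _ h => ?_) _ _ hrest)
    exact CWStep.of_cwRaw_rotate (n := 0) (by simpa using h)

theorem CWStep.weldedStep {u v : GWord} (h : CWStep u v) : WeldedStep u v := by
  obtain ⟨u₀, v₀, hu, hv, hmove⟩ := h
  exact ⟨u₀, v₀, hu, hv, by tauto⟩

theorem reflTransGen_wRaw_tail_append {m : GWord} (hm : ∀ e ∈ m, e.2.1 = false)
    (x y : GWord) (a : ℕ) (s : Bool) :
    ReflTransGen WRaw (x ++ (a, false, s) :: (m ++ y)) (x ++ m ++ (a, false, s) :: y) := by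
  induction m generalizing x with
  | nil => simpa using .refl
  | cons e m ih =>
    obtain ⟨b, hb, t⟩ := e
    obtain rfl : hb = false := hm _ mem_cons_self
    refine .head ⟨x, m ++ y, a, b, s, t, rfl, rfl⟩ ?_
    simpa using ih (fun e he => hm e (mem_cons_of_mem _ he)) (x ++ [(b, false, t)])

theorem TailsFirst.exists_eq_tail_append_head {v : GWord} (hv : IsGaussCode v)
    (htf : TailsFirst v) (hne : v ≠ []) :
    ∃ (X M Y : GWord) (a : ℕ) (s : Bool),
      v = X ++ (a, false, s) :: (M ++ (a, true, s) :: Y) ∧ ∀ e ∈ M, e.2.1 = false := by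
  obtain ⟨e, he⟩ := exists_mem_of_ne_nil v hne
  obtain ⟨-, _, -, hhead⟩ := hv e.1 ⟨e, he, rfl⟩
  obtain ⟨⟨a, hd, s⟩, hfind⟩ := Option.isSome_iff_exists.1
    (find?_isSome (p := fun e : GEntry => e.2.1) |>.2 ⟨_, hhead, rfl⟩)
  obtain ⟨rfl : hd = true, X, Y, rfl, hX⟩ := find?_eq_some_iff_append.1 hfind
  obtain ⟨-, s₀, ht, hh⟩ := hv a ⟨(a, true, s), by simp, rfl⟩
  have htX : (a, false, s₀) ∈ X := by
    simp only [mem_append, mem_cons] at ht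
    rcases ht with h | h | h
    · exact h
    · simp at h
    · obtain ⟨y, z, rfl⟩ := append_of_mem h
      exact (htf ⟨X, y, z, a, s, s₀, rfl⟩).elim
  obtain ⟨X₁, M, rfl⟩ := append_of_mem htX
  have hdec : X₁ ++ (a, false, s₀) :: M ++ (a, true, s) :: Y =
      X₁ ++ (a, false, s₀) :: (M ++ (a, true, s) :: Y) := by simp
  obtain rfl : s = s₀ := by
    have hs : (a, true, s₀) ∉ X₁ ++ M ++ Y :=
      fun h => hv.label_ne_of_eq_append hdec rfl rfl _ h rfl
    simp only [hdec, mem_append, mem_cons, Prod.mk.injEq, true_and] at hh hs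
    tauto
  exact ⟨X₁, M, Y, a, s, hdec, fun e he => by simpa using hX e (by simp [he])⟩

theorem TailsFirst.exists_reflTransGen_shorter {v : GWord} (hv : IsGaussCode v)
    (htf : TailsFirst v) (hne : v ≠ []) :
    ∃ w, ReflTransGen CWRaw v w ∧ IsGaussCode w ∧ TailsFirst w ∧ w.length < v.length := by
  obtain ⟨X, M, Y, a, s, rfl, hM⟩ := htf.exists_eq_tail_append_head hv hne
  have hlabel : ∀ e ∈ X ++ M ++ Y, e.1 ≠ a := hv.label_ne_of_eq_append rfl rfl rfl
  refine ⟨X ++ M ++ Y, ?_, ?_, htf.sublist (by simp), by simp⟩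
  · have hslide := reflTransGen_wRaw_tail_append hM X ((a, true, s) :: Y) a s
    exact (ReflTransGen.mono (fun _ _ => Or.inl) _ _ hslide).tail
      (Or.inr ⟨X ++ M, Y, a, false, s, hlabel, by simp, rfl⟩)
  · rw [← deleteChord_eq_append (e₁ := (a, false, s)) (e₂ := (a, true, s)) hlabel rfl rfl]
    exact hv.deleteChord a

theorem TailsFirst.reflTransGen_nil {v : GWord} (hv : IsGaussCode v) (htf : TailsFirst v) :
    ReflTransGen CWRaw v [] := by
  rcases eq_or_ne v [] with rfl | hne
  · rfl
  obtain ⟨w, hvw, hw, hwtf, hlt⟩ := htf.exists_reflTransGen_shorter hv hne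
  exact hvw.trans (hwtf.reflTransGen_nil hw)
termination_by v.length

/-- Every descending Gauss code can be transformed into the
empty code by a finite sequence of C1 and W moves; in particular, every
descending Gauss code represents the trivial welded knot. -/
theorem descending_unknots_by_C1_W (D : GWord) (hD : IsGaussCode D)
    (hdesc : IsDescending D) :
    CWEquiv D [] ∧ WeldedEquiv D [] := by
  obtain ⟨n, htf⟩ := hdesc
  have hDn : IsGaussCode (D.rotate n) := hD.perm (rotate_perm D n).symm
  have hcw : CWEquiv D [] := by
    refine EqvGen.reflTransGen_le_eqvGen _ _ _ (reflTransGen_cwStep_nil_of_rotate (n := n) ?_)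
    rcases htf with htf | htf
    · exact htf.reflTransGen_nil hDn
    · simpa [Function.onFun] using ReflTransGen.lift reverse (fun _ _ => CWRaw.reverse) _ _
        (htf.reflTransGen_nil (hDn.perm (reverse_perm _).symm))
  exact ⟨hcw, EqvGen.mono (fun _ _ => CWStep.weldedStep) _ _ hcw⟩
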